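/- In the setting of the R_right Lag system (Lemma on clockwise rotation), starting from (s₁,blank)...(s_{n-2},blank)(s_{n-1},R)(sₙ,blank) with n ≥ 5, after exactly n iterations the memory string is (s₁,blank)...(s_{n-3},blank)(s_{n-2},d)(s_{n-1},t)(sₙ,blank). -/

import Mathlib

namespace Stmt7

/-- Control symbols for the clockwise-rotation construction. -/
inductive Ctl | blank | p | t | w | R | d | g | z | v | r
deriving DecidableEq

/-- The rule set `R_right` on control coordinates: `R_t` together with the
rules for the pulsed-hold token `d`, the interaction tokens `g`, `z`,
the victory pulse `v`, and the begin/end tokens `R`, `r`. -/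
def rc : Ctl → Ctl → Option Ctl
  | .blank, .blank => some .blank
  | .blank, .p => some .p
  | .p, .blank => some .blank
  | .blank, .t => some .p
  | .blank, .w => some .blank
  | .t, .blank => some .w
  | .w, .blank => some .w
  | .w, .p => some .t
  | .p, .w => some .blank
  | .blank, .R => some .d
  | .blank, .d => some .blank
  | .blank, .g => some .z
  | .blank, .z => some .p
  | .blank, .v => some .v
  | .blank, .r => some .blank
  | .R, .blank => some .t
  | .w, .d => some .v
  | .w, .z => some .w
  | .p, .d => some .blank
  | .d, .blank => some .d
  | .d, .t => some .g
  | .d, .p => some .g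
  | .d, .v => some .r
  | .g, .blank => some .blank
  | .g, .w => some .blank
  | .z, .blank => some .d
  | .v, .blank => some .blank
  | .v, .d => some .blank
  | _, _ => none

/-- One Lag iteration with context length 2: match the control symbols of the
first two pairs, delete the first pair, append a pair with the first pair's
data symbol and the rule's output control symbol. -/
def step {α : Type*} (r : Ctl → Ctl → Option Ctl) :
    List (α × Ctl) → Option (List (α × Ctl))
  | (x, a) :: (y, b) :: rest => (r a b).map fun c => (y, b) :: rest ++ [(x, c)]
  | _ => none

/-- `k` iterations of the Lag system. -/
def iterL {α : Type*} (r : Ctl → Ctl → Option Ctl) :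
    ℕ → List (α × Ctl) → Option (List (α × Ctl))
  | 0, s => some s
  | k + 1, s => (step r s).bind (iterL r k)

end Stmt7

/-! The `n - 3` leading cells meet `blank·blank → blank` and are merely rotated to the back.
The last three iterations apply `blank·R → d`, `R·blank → t` and `blank·blank → blank` to
`(s_{n-2},blank)(s_{n-1},R)(sₙ,blank)`; the last of these reads the first rotated cell, so at least
one cell must precede `s_{n-2}`. -/

namespace Stmt7

variable {α : Type*}

def blanks (xs : List α) : List (α × Ctl) := xs.map fun x => (x, .blank)

theorem iterL_add (r : Ctl → Ctl → Option Ctl) (j k : ℕ) (s : List (α × Ctl)) :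
    iterL r (j + k) s = (iterL r j s).bind (iterL r k) := by
  induction j generalizing s with
  | zero => simp [iterL]
  | succ j ih =>
    rw [Nat.succ_add]
    cases h : step r s <;> simp [iterL, h, ih]

theorem iterL_rc_blanks_append (xs : List α) (b : α) (L : List (α × Ctl)) :
    iterL rc xs.length (blanks xs ++ (b, .blank) :: L) = some ((b, .blank) :: L ++ blanks xs) := by
  induction xs generalizing L with
  | nil => simp [blanks, iterL]
  | cons x xs ih =>
    have hstep : step rc (blanks (x :: xs) ++ (b, .blank) :: L) =
        some (blanks xs ++ (b, .blank) :: (L ++ [(x, .blank)])) := by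
      cases xs <;> simp [blanks, step, rc]
    rw [List.length_cons, iterL, hstep, Option.bind_some, ih]
    simp [blanks]

theorem iterL_three_rc_R {xs : List α} (hxs : xs ≠ []) (b c d : α) :
    iterL rc 3 ((b, .blank) :: (c, .R) :: (d, .blank) :: blanks xs) =
      some (blanks xs ++ [(b, .d), (c, .t), (d, .blank)]) := by
  obtain ⟨x, xs, rfl⟩ := List.exists_cons_of_ne_nil hxs
  simp [iterL, step, rc, blanks]

theorem iterL_rc_blanks_R {xs : List α} (hxs : xs ≠ []) (b c d : α) :
    iterL rc (xs.length + 3) (blanks xs ++ [(b, .blank), (c, .R), (d, .blank)]) =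
      some (blanks xs ++ [(b, .d), (c, .t), (d, .blank)]) := by
  rw [iterL_add, iterL_rc_blanks_append, Option.bind_some]
  exact iterL_three_rc_R hxs b c d

theorem ofFn_prod_eq_blanks_append {m : ℕ} (s : Fin (m + 3) → α) (c : Fin (m + 3) → Ctl)
    (hc : ∀ i : Fin (m + 3), i.val < m → c i = .blank) :
    List.ofFn (fun i => (s i, c i)) =
      blanks (List.ofFn fun i : Fin m => s (Fin.castAdd 3 i)) ++
        [(s (Fin.natAdd m 0), c (Fin.natAdd m 0)), (s (Fin.natAdd m 1), c (Fin.natAdd m 1)),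
          (s (Fin.natAdd m 2), c (Fin.natAdd m 2))] := by
  rw [List.ofFn_add, blanks, List.map_ofFn]
  congr 1
  exact congrArg List.ofFn (funext fun i => Prod.ext rfl (hc _ i.isLt))

end Stmt7

open Stmt7 in
/-- Starting from `(s₁,blank)...(s_{n-2},blank)(s_{n-1},R)(sₙ,blank)` with `n ≥ 5`,
after exactly `n` iterations the memory string is
`(s₁,blank)...(s_{n-3},blank)(s_{n-2},d)(s_{n-1},t)(sₙ,blank)`. -/
theorem stmt7 {α : Type*} (n : ℕ) (hn : 5 ≤ n) (s : Fin n → α) :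
    iterL rc n
      (List.ofFn fun i : Fin n => (s i, if i.val = n - 2 then Ctl.R else Ctl.blank)) =
    some (List.ofFn fun i : Fin n =>
      (s i, if i.val = n - 3 then Ctl.d
            else if i.val = n - 2 then Ctl.t else Ctl.blank)) := by
  obtain ⟨m, rfl⟩ : ∃ m, n = m + 3 := ⟨n - 3, by omega⟩
  have hm : m ≠ 0 := by omega
  rw [ofFn_prod_eq_blanks_append _ _ fun i hi => if_neg (by omega),
    ofFn_prod_eq_blanks_append _ _ fun i hi => by rw [if_neg (by omega), if_neg (by omega)]]
  simpa using iterL_rc_blanks_R (List.ofFn_eq_nil_iff.not.mpr hm) _ _ _
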